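/- Every type function f ∈ 𝓣_n is a monotone subtype. -/

import Mathlib

/-!
Write `O = O_f`. The string `θ` lies `≤_O`-below `s` exactly when `s` vanishes on `I_f = Oᶜ`,
and `s ≤_O θ` exactly when `s` vanishes on `O`. Hence a monotone `f` with `f(θ) = 1` satisfies
`p_{I_f} ≤ f`, and `f ≤ (p_{O_f})*` says that `f` vanishes at the nonzero strings below `θ`.
These three properties survive the type constructors: complementation replaces `O_f` by its
complement, which reverses `≤_O`; a permutation transports everything; and `≤_{O_{f ⊗ g}}` is
the product of `≤_{O_f}` and `≤_{O_g}`.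
-/

open Classical

namespace HOT

/-- Binary strings of length `n`, identified with `{0,1}^n`. -/
abbrev Str (n : ℕ) := Fin n → Bool

/-- The all-zeros string `θ`. -/
def theta (n : ℕ) : Str n := fun _ => false

/-- `𝓕_n`: boolean functions on `{0,1}^n` with `f(θ) = 1`. -/
def Fcal (n : ℕ) : Set (Str n → Bool) := {f | f (theta n) = true}

/-- The complement `f* = 1 - f + p_n`. -/
noncomputable def star {n : ℕ} (f : Str n → Bool) : Str n → Bool :=
  fun s => if s = theta n then true else !(f s)

/-- First block `s¹` of a string `s ∈ {0,1}^{m+n}`. -/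
def fstStr {m n : ℕ} (s : Str (m + n)) : Str m := fun i => s (Fin.castAdd n i)

/-- Second block `s²` of a string `s ∈ {0,1}^{m+n}`. -/
def sndStr {m n : ℕ} (s : Str (m + n)) : Str n := fun j => s (Fin.natAdd m j)

/-- Tensor product `(f ⊗ g)(s) = f(s¹) · g(s²)`. -/
noncomputable def tensor {m n : ℕ} (f : Str m → Bool) (g : Str n → Bool) :
    Str (m + n) → Bool :=
  fun s => f (fstStr s) && g (sndStr s)

/-- `f ⅋ g := (f* ⊗ g*)*`. -/
noncomputable def parr {m n : ℕ} (f : Str m → Bool) (g : Str n → Bool) :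
    Str (m + n) → Bool :=
  star (tensor (star f) (star g))

/-- The causal product `f ◁ g` (`f` on the first `m` bits, `g` on the last `n` bits):
`(f ◁ g)(s) = f(s¹)` if `s¹ ≠ θ_m`, else `g(s²)`. -/
noncomputable def causalL {m n : ℕ} (f : Str m → Bool) (g : Str n → Bool) :
    Str (m + n) → Bool :=
  fun s => if fstStr s = theta m then g (sndStr s) else f (fstStr s)

/-- The causal product `g ◁ f` (`f` on the first `m` bits, `g` on the last `n` bits):
`(g ◁ f)(s) = g(s²)` if `s² ≠ θ_n`, else `f(s¹)`. -/
noncomputable def causalR {m n : ℕ} (f : Str m → Bool) (g : Str n → Bool) :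
    Str (m + n) → Bool :=
  fun s => if sndStr s = theta n then f (fstStr s) else g (sndStr s)

/-- `p_T(s) = 1` iff `s_i = 0` for all `i ∈ T`. -/
noncomputable def pSet {n : ℕ} (T : Set (Fin n)) : Str n → Bool :=
  fun s => decide (∀ i ∈ T, s i = false)

/-- The string `e^i` with `1` exactly in position `i`. -/
def eStr {n : ℕ} (i : Fin n) : Str n := fun j => decide (j = i)

/-- The string `e^{i,j}` with `1` exactly in positions `i` and `j`. -/
def e2Str {n : ℕ} (i j : Fin n) : Str n := fun l => decide (l = i ∨ l = j)

/-- Input indices `I_f = {i : f(e^i) = 0}`. -/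
def Iset {n : ℕ} (f : Str n → Bool) : Set (Fin n) := {i | f (eStr i) = false}

/-- Output indices `O_f = {j : f(e^j) = 1}`. -/
def Oset {n : ℕ} (f : Str n → Bool) : Set (Fin n) := {j | f (eStr j) = true}

/-- `f` is a subtype if `p_{I_f} ≤ f ≤ (p_{O_f})*` pointwise. -/
def IsSubtype {n : ℕ} (f : Str n → Bool) : Prop :=
  pSet (Iset f) ≤ f ∧ f ≤ star (pSet (Oset f))

/-- The partial order `≤_O`: `s ≤_O t` iff `s_i ≤ t_i` for `i ∈ O` and `s_i ≥ t_i` for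
`i ∉ O`. -/
def leO {n : ℕ} (O : Set (Fin n)) (s t : Str n) : Prop :=
  ∀ i, (i ∈ O → s i ≤ t i) ∧ (i ∉ O → t i ≤ s i)

/-- `f` is monotone (with respect to `≤_{O_f}`). -/
def MonotoneF {n : ℕ} (f : Str n → Bool) : Prop :=
  ∀ s t, leO (Oset f) s t → f s ≤ f t

/-- The action of a permutation on strings: `σ(s)_i = s_{σ⁻¹(i)}`. -/
def permAct {n : ℕ} (σ : Equiv.Perm (Fin n)) (s : Str n) : Str n := fun i => s (σ⁻¹ i)

/-- `(f ∘ σ)(s) = f(σ(s))`. -/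
def permComp {n : ℕ} (f : Str n → Bool) (σ : Equiv.Perm (Fin n)) : Str n → Bool :=
  fun s => f (permAct σ s)

/-- The inductively defined family `𝓣_n` of type functions. -/
inductive IsType : (n : ℕ) → (Str n → Bool) → Prop
  | one : IsType 1 (fun _ => true)
  | dual {n : ℕ} {f : Str n → Bool} : IsType n f → IsType n (star f)
  | perm {n : ℕ} {f : Str n → Bool} (σ : Equiv.Perm (Fin n)) :
      IsType n f → IsType n (permComp f σ)
  | tens {m n : ℕ} {f : Str m → Bool} {g : Str n → Bool} :
      IsType m f → IsType n g → IsType (m + n) (tensor f g)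

/-- Interpretation of a bit as an integer. -/
def toZ (b : Bool) : ℤ := (b.toNat : ℤ)

/-- `f` is a chain type: `f = Σ_{i=0}^N (-1)^i p_{S_i}` for a strictly increasing chain
`S_0 ⊊ ⋯ ⊊ S_N ⊆ [n]` with `N` even. -/
def IsChainType {n : ℕ} (f : Str n → Bool) : Prop :=
  ∃ N : ℕ, Even N ∧ ∃ S : Fin (N + 1) → Set (Fin n), StrictMono S ∧
    ∀ s : Str n, toZ (f s) = ∑ i : Fin (N + 1), (-1 : ℤ) ^ (i : ℕ) * toZ (pSet (S i) s)

/-- The Möbius transform `f̂_T`. -/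
noncomputable def mobius {n : ℕ} (f : Str n → Bool) (T : Set (Fin n)) : ℤ :=
  ∑ s : Str n, if ∀ j, j ∉ T → s j = true then
    (-1 : ℤ) ^ (∑ j : Fin n, if j ∈ T then (s j).toNat else 0) * toZ (f s)
  else 0

/-- The structure poset `𝓟_f = {T ⊆ [n] : f̂_T ≠ 0}`, ordered by inclusion. -/
noncomputable def structPoset {n : ℕ} (f : Str n → Bool) : Set (Set (Fin n)) :=
  {T | mobius f T ≠ 0}

/-- The label set `L_T = T ∖ ⋃ {S ∈ 𝓟_f : S ⊊ T}`. -/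
noncomputable def labels {n : ℕ} (f : Str n → Bool) (T : Set (Fin n)) : Set (Fin n) :=
  T \ ⋃₀ {S | S ∈ structPoset f ∧ S ⊂ T}

/-- The reduced structure poset `𝓟_f^0`: `∅` (if `∅ ∈ 𝓟_f`) together with all
`T ∈ 𝓟_f` with `L_T ≠ ∅`. -/
noncomputable def reducedPoset {n : ℕ} (f : Str n → Bool) : Set (Set (Fin n)) :=
  {T | T ∈ structPoset f ∧ (T = ∅ ∨ labels f T ≠ ∅)}

/-- The rank `ρ_f(T)`: the length of a longest chain in `𝓟_f` with top element `T`
(this is the length of any maximal such chain in the graded poset `𝓟_f`). -/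
noncomputable def rank {n : ℕ} (f : Str n → Bool) (T : Set (Fin n)) : ℕ :=
  sSup {k | ∃ c : Fin (k + 1) → Set (Fin n), StrictMono c ∧
    (∀ i, c i ∈ structPoset f) ∧ c (Fin.last k) = T}

/-- The rank `r(f)` of the whole poset `𝓟_f`: the common length of its maximal chains. -/
noncomputable def rk {n : ℕ} (f : Str n → Bool) : ℕ :=
  sSup {k | ∃ c : Fin (k + 1) → Set (Fin n), StrictMono c ∧ ∀ i, c i ∈ structPoset f}

/-- `𝕋_i^f = {T ∈ 𝓟_f : i ∈ L_T}`. -/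
noncomputable def Tset {n : ℕ} (f : Str n → Bool) (i : Fin n) : Set (Set (Fin n)) :=
  {T | T ∈ structPoset f ∧ i ∈ labels f T}

/-- The rank `r_f(i)` of an index: the common rank of elements of `𝕋_i^f`, or `r(f)+1`
if `𝕋_i^f = ∅` (a free output). -/
noncomputable def idxRank {n : ℕ} (f : Str n → Bool) (i : Fin n) : ℕ :=
  if (Tset f i).Nonempty then sSup (rank f '' Tset f i) else rk f + 1

/-- `X` is the greatest lower bound of `S` and `T` in the poset `(P, ⊆)`. -/
def IsGLBIn {n : ℕ} (P : Set (Set (Fin n))) (S T X : Set (Fin n)) : Prop :=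
  X ∈ P ∧ X ⊆ S ∧ X ⊆ T ∧ ∀ Y ∈ P, Y ⊆ S → Y ⊆ T → Y ⊆ X

/-- `X` is the least upper bound of `S` and `T` in the poset `(P, ⊆)`. -/
def IsLUBIn {n : ℕ} (P : Set (Set (Fin n))) (S T X : Set (Fin n)) : Prop :=
  X ∈ P ∧ S ⊆ X ∧ T ⊆ X ∧ ∀ Y ∈ P, S ⊆ Y → T ⊆ Y → X ⊆ Y

/-- `S^↓`: the downset generated by `S` in `𝓟_f^0`. -/
noncomputable def downSet {n : ℕ} (f : Str n → Bool) (S : Set (Fin n)) :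
    Set (Set (Fin n)) :=
  {X | X ∈ reducedPoset f ∧ X ⊆ S}

/-- `S^↑`: the upset generated by `S` in `𝓟_f^0`. -/
noncomputable def upSet {n : ℕ} (f : Str n → Bool) (S : Set (Fin n)) :
    Set (Set (Fin n)) :=
  {X | X ∈ reducedPoset f ∧ S ⊆ X}

/-- The pair rank `r_f(i,j)`: `max{ρ_f(S ∧ T) : S ∈ 𝕋_i^f, T ∈ 𝕋_j^f, S ∧ T exists in 𝓟_f}`;
`-1` if this set is empty, unless `i` or `j` is a free output, in which case it is
`min{r_f(i), r_f(j)}`. -/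
noncomputable def pairRank {n : ℕ} (f : Str n → Bool) (i j : Fin n) : ℤ :=
  if _h : ∃ r : ℤ, ∃ S ∈ Tset f i, ∃ T ∈ Tset f j, ∃ X, IsGLBIn (structPoset f) S T X ∧
      r = (rank f X : ℤ) then
    sSup {r : ℤ | ∃ S ∈ Tset f i, ∃ T ∈ Tset f j, ∃ X, IsGLBIn (structPoset f) S T X ∧
      r = (rank f X : ℤ)}
  else if Tset f i = ∅ ∨ Tset f j = ∅ then
    min (idxRank f i : ℤ) (idxRank f j : ℤ)
  else -1

/-- Membership in the sublattice generated by a set `S`. -/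
inductive InLatGen {α : Type*} [Lattice α] (S : Set α) : α → Prop
  | base {a : α} : a ∈ S → InLatGen S a
  | sup {a b : α} : InLatGen S a → InLatGen S b → InLatGen S (a ⊔ b)
  | inf {a b : α} : InLatGen S a → InLatGen S b → InLatGen S (a ⊓ b)

/-- For `s ≰_O θ`, `f_s` is the function with support `U_s ∪ U_θ` (w.r.t. `≤_O`). -/
noncomputable def fStr {n : ℕ} (O : Set (Fin n)) (s : Str n) : Str n → Bool :=
  fun t => decide (leO O s t ∨ leO O (theta n) t)

/-- A string `s ∉ D_θ ∪ U_θ` is basic (for `≤_O`) if `s_j = 1` for exactly one `j ∈ O`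
and `s_i = 0` for at most one `i ∈ I = Oᶜ`. -/
def IsBasic {n : ℕ} (O : Set (Fin n)) (s : Str n) : Prop :=
  ¬ leO O s (theta n) ∧ ¬ leO O (theta n) s ∧
  (∃! j, j ∈ O ∧ s j = true) ∧
  (∀ i i', i ∈ Oᶜ → i' ∈ Oᶜ → s i = false → s i' = false → i = i')

lemma eStr_ne_theta {n : ℕ} (i : Fin n) : eStr i ≠ theta n :=
  fun h => by simpa [eStr, theta] using congrFun h i

lemma star_apply_of_ne {n : ℕ} (f : Str n → Bool) {s : Str n} (h : s ≠ theta n) :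
    star f s = !f s :=
  if_neg h

lemma Iset_eq_compl_Oset {n : ℕ} (f : Str n → Bool) : Iset f = (Oset f)ᶜ := by
  ext i
  simp [Iset, Oset]

lemma Oset_star {n : ℕ} (f : Str n → Bool) : Oset (star f) = (Oset f)ᶜ := by
  ext i
  simp [Oset, star_apply_of_ne f (eStr_ne_theta i)]

section LeO

variable {n : ℕ} {O : Set (Fin n)} {s t : Str n}

lemma theta_leO_iff : leO O (theta n) s ↔ ∀ i ∉ O, s i = false := by
  simp [leO, theta, Bool.le_iff_imp]

lemma leO_theta_iff : leO O s (theta n) ↔ ∀ i ∈ O, s i = false := by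
  simp [leO, theta, Bool.le_iff_imp]

lemma leO_compl_iff : leO Oᶜ s t ↔ leO O t s := by
  simp only [leO, Set.mem_compl_iff, not_not]
  exact forall_congr' fun _ => and_comm

lemma leO_permAct_iff (σ : Equiv.Perm (Fin n)) :
    leO O (permAct σ s) (permAct σ t) ↔ leO (σ ⁻¹' O) s t := by
  rw [leO, ← σ.forall_congr_right]
  simp [leO, permAct]

end LeO

lemma permAct_eq_theta_iff {n : ℕ} (σ : Equiv.Perm (Fin n)) {s : Str n} :
    permAct σ s = theta n ↔ s = theta n := by
  simp only [funext_iff, permAct, theta]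
  exact σ⁻¹.forall_congr_right (q := fun i => s i = false)

lemma permAct_eStr {n : ℕ} (σ : Equiv.Perm (Fin n)) (i : Fin n) :
    permAct σ (eStr i) = eStr (σ i) := by
  ext j
  simp [permAct, eStr, Equiv.symm_apply_eq]

lemma Oset_permComp {n : ℕ} (f : Str n → Bool) (σ : Equiv.Perm (Fin n)) :
    Oset (permComp f σ) = σ ⁻¹' Oset f := by
  ext i
  simp [Oset, permComp, permAct_eStr]

lemma theta_eq_iff_fstStr_sndStr {m n : ℕ} {s : Str (m + n)} :
    s = theta (m + n) ↔ fstStr s = theta m ∧ sndStr s = theta n := by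
  simp only [funext_iff, fstStr, sndStr, theta]
  exact Fin.forall_fin_add _

lemma castAdd_preimage_Oset_tensor {m n : ℕ} (f : Str m → Bool) {g : Str n → Bool}
    (hg : g (theta n) = true) : Fin.castAdd n ⁻¹' Oset (tensor f g) = Oset f := by
  have hfst (i : Fin m) : fstStr (eStr (Fin.castAdd n i)) = eStr i := by
    ext j; simp [fstStr, eStr]
  have hsnd (i : Fin m) : sndStr (eStr (Fin.castAdd n i)) = theta n := by
    ext j; simp [sndStr, eStr, theta, Fin.ext_iff]; omega
  ext i
  simp [Oset, tensor, hfst, hsnd, hg]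

lemma natAdd_preimage_Oset_tensor {m n : ℕ} {f : Str m → Bool} (g : Str n → Bool)
    (hf : f (theta m) = true) : Fin.natAdd m ⁻¹' Oset (tensor f g) = Oset g := by
  have hfst (j : Fin n) : fstStr (eStr (Fin.natAdd m j)) = theta m := by
    ext i; simp [fstStr, eStr, theta, Fin.ext_iff]; omega
  have hsnd (j : Fin n) : sndStr (eStr (Fin.natAdd m j)) = eStr j := by
    ext i; simp [sndStr, eStr]
  ext j
  simp [Oset, tensor, hfst, hsnd, hf]

lemma leO_iff_fstStr_sndStr {m n : ℕ} {O : Set (Fin (m + n))} {s t : Str (m + n)} :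
    leO O s t ↔ leO (Fin.castAdd n ⁻¹' O) (fstStr s) (fstStr t) ∧
      leO (Fin.natAdd m ⁻¹' O) (sndStr s) (sndStr t) :=
  Fin.forall_fin_add _

/-- Equivalent to `IsSubtype f ∧ MonotoneF f`, in the form preserved by the type constructors. -/
structure IsMonotoneSubtype {n : ℕ} (f : Str n → Bool) : Prop where
  apply_theta : f (theta n) = true
  monotone : MonotoneF f
  apply_eq_false : ∀ s, s ≠ theta n → leO (Oset f) s (theta n) → f s = false

namespace IsMonotoneSubtype

variable {m n : ℕ} {f : Str m → Bool} {g : Str n → Bool}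

theorem isSubtype (hf : IsMonotoneSubtype f) : IsSubtype f := by
  refine ⟨fun s => Bool.le_iff_imp.2 fun hs => ?_, fun s => Bool.le_iff_imp.2 fun hfs => ?_⟩
  · have hθs : leO (Oset f) (theta m) s := by
      rw [theta_leO_iff]
      simpa [pSet, Iset_eq_compl_Oset] using hs
    simpa [hf.apply_theta, Bool.le_iff_imp] using hf.monotone _ _ hθs
  · by_cases hs : s = theta m
    · simp [hs, HOT.star]
    rw [star_apply_of_ne _ hs, Bool.not_eq_true', pSet, decide_eq_false_iff_not]
    intro hsO
    simp [hf.apply_eq_false s hs (leO_theta_iff.2 hsO)] at hfs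

theorem star (hf : IsMonotoneSubtype f) : IsMonotoneSubtype (star f) where
  apply_theta := if_pos rfl
  monotone s t hst := by
    rw [Oset_star, leO_compl_iff] at hst
    by_cases ht : t = theta m
    · simp [ht, HOT.star]
    by_cases hs : s = theta m
    · subst hs
      simp [star_apply_of_ne f ht, hf.apply_eq_false t ht hst]
    rw [star_apply_of_ne f hs, star_apply_of_ne f ht]
    exact compl_le_compl (hf.monotone t s hst)
  apply_eq_false s hs hsθ := by
    rw [Oset_star, leO_compl_iff] at hsθ
    have hfs : f s = true := by
      simpa [hf.apply_theta, Bool.le_iff_imp] using hf.monotone _ _ hsθ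
    rw [star_apply_of_ne f hs, hfs, Bool.not_true]

theorem permComp (hf : IsMonotoneSubtype f) (σ : Equiv.Perm (Fin m)) :
    IsMonotoneSubtype (permComp f σ) where
  apply_theta := hf.apply_theta
  monotone s t hst := hf.monotone _ _ (by rwa [leO_permAct_iff, ← Oset_permComp])
  apply_eq_false s hs hsθ := by
    refine hf.apply_eq_false _ (by rwa [Ne, permAct_eq_theta_iff]) ?_
    change leO _ (permAct σ s) (permAct σ (theta m))
    rwa [leO_permAct_iff, ← Oset_permComp]

theorem tensor (hf : IsMonotoneSubtype f) (hg : IsMonotoneSubtype g) :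
    IsMonotoneSubtype (tensor f g) where
  apply_theta := by
    change (f (theta m) && g (theta n)) = true
    rw [hf.apply_theta, hg.apply_theta, Bool.and_self]
  monotone s t hst := by
    rw [leO_iff_fstStr_sndStr, castAdd_preimage_Oset_tensor f hg.apply_theta,
      natAdd_preimage_Oset_tensor g hf.apply_theta] at hst
    exact Bool.le_and ((Bool.and_le_left _ _).trans (hf.monotone _ _ hst.1))
      ((Bool.and_le_right _ _).trans (hg.monotone _ _ hst.2))
  apply_eq_false s hs hsθ := by
    rw [leO_iff_fstStr_sndStr, castAdd_preimage_Oset_tensor f hg.apply_theta,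
      natAdd_preimage_Oset_tensor g hf.apply_theta] at hsθ
    rw [Ne, theta_eq_iff_fstStr_sndStr, not_and_or] at hs
    rcases hs with hs₁ | hs₂
    · simp [HOT.tensor, hf.apply_eq_false _ hs₁ hsθ.1]
    · simp [HOT.tensor, hg.apply_eq_false _ hs₂ hsθ.2]

end IsMonotoneSubtype

lemma isMonotoneSubtype_const_true {n : ℕ} : IsMonotoneSubtype (fun _ : Str n => true) where
  apply_theta := rfl
  monotone _ _ _ := le_rfl
  apply_eq_false s hs hsθ := by
    refine absurd (funext fun i => ?_) hs
    exact leO_theta_iff.1 hsθ i rfl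

theorem IsType.isMonotoneSubtype {n : ℕ} {f : Str n → Bool} (hf : IsType n f) :
    IsMonotoneSubtype f := by
  induction hf with
  | one => exact isMonotoneSubtype_const_true
  | dual _ ih => exact ih.star
  | perm σ _ ih => exact ih.permComp σ
  | tens _ _ ihf ihg => exact ihf.tensor ihg

/-- every type function is a monotone subtype. -/
theorem stmt10 {n : ℕ} (f : Str n → Bool) (hf : IsType n f) :
    IsSubtype f ∧ MonotoneF f :=
  ⟨hf.isMonotoneSubtype.isSubtype, hf.isMonotoneSubtype.monotone⟩

end HOT
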